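/- Let G be a Hausdorff topological gyrogroup and H a locally compact strongly L-subgyrogroup of G. If the quotient space G/H is locally compact, then G is locally compact. -/
import Mathlib


universe u

/-- A gyrogroup: a groupoid with identity, inverses, gyroautomorphisms satisfying the
left gyroassociative law and the left loop property. -/
class Gyrogroup (G : Type u) where
  add : G → G → G
  zero : G
  neg : G → G
  gyr : G → G → G → G
  zero_add : ∀ x, add zero x = x
  add_zero : ∀ x, add x zero = x
  neg_add : ∀ x, add (neg x) x = zero
  add_neg : ∀ x, add x (neg x) = zero
  gyr_bijective : ∀ a b, Function.Bijective (gyr a b)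
  gyr_add : ∀ a b x y, gyr a b (add x y) = add (gyr a b x) (gyr a b y)
  gyrassoc : ∀ a b z, add a (add b z) = add (add a b) (gyr a b z)
  loop : ∀ a b, gyr (add a b) b = gyr a b

/-- A topological gyrogroup: the operation is jointly continuous and inversion is continuous. -/
class TopologicalGyrogroup (G : Type u) [TopologicalSpace G] [Gyrogroup G] : Prop where
  continuous_add : Continuous fun p : G × G => Gyrogroup.add p.1 p.2
  continuous_neg : Continuous (Gyrogroup.neg : G → G)

/-- `H` is a subgyrogroup of `G` (by the subgyrogroup criterion: nonempty and closed
under the operation and inversion; this is equivalent to `(H, ⊕|H)` being itself a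
gyrogroup whose gyroautomorphisms are the restrictions of those of `G`). -/
structure IsSubgyrogroup {G : Type u} [Gyrogroup G] (H : Set G) : Prop where
  nonempty : H.Nonempty
  add_mem : ∀ ⦃a⦄, a ∈ H → ∀ ⦃b⦄, b ∈ H → Gyrogroup.add a b ∈ H
  neg_mem : ∀ ⦃a⦄, a ∈ H → Gyrogroup.neg a ∈ H

/-- An `L`-subgyrogroup: a subgyrogroup with `gyr[a,h](H) = H` for all `a ∈ G`, `h ∈ H`. -/
structure IsLSubgyrogroup {G : Type u} [Gyrogroup G] (H : Set G)
    extends IsSubgyrogroup H : Prop where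
  gyr_image : ∀ (a : G), ∀ ⦃h⦄, h ∈ H → Gyrogroup.gyr a h '' H = H

/-- A strongly `L`-subgyrogroup: a subgyrogroup with `gyr[a,b](H) ⊆ H` for all `a, b ∈ G`. -/
structure IsStronglyLSubgyrogroup {G : Type u} [Gyrogroup G] (H : Set G)
    extends IsSubgyrogroup H : Prop where
  gyr_image_subset : ∀ a b : G, Gyrogroup.gyr a b '' H ⊆ H

/-- The pointwise sum `A ⊕ B = {a ⊕ b : a ∈ A, b ∈ B}` of two subsets. -/
def setAdd {G : Type u} [Gyrogroup G] (A B : Set G) : Set G :=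
  Set.image2 Gyrogroup.add A B

/-- The left coset `a ⊕ H = {a ⊕ h : h ∈ H}`. -/
def lCoset {G : Type u} [Gyrogroup G] (H : Set G) (a : G) : Set G :=
  (fun h => Gyrogroup.add a h) '' H

/-- The setoid on `G` identifying points with the same left coset modulo `H`. -/
def cosetSetoid {G : Type u} [Gyrogroup G] (H : Set G) : Setoid G :=
  ⟨fun x y => lCoset H x = lCoset H y,
   ⟨fun _ => rfl, fun h => h.symm, fun h₁ h₂ => h₁.trans h₂⟩⟩

/-- The coset space `G/H`, carrying the quotient topology: a set `O ⊆ G/H` is open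
iff `π⁻¹(O)` is open in `G`. -/
abbrev GyroQuot {G : Type u} [Gyrogroup G] (H : Set G) : Type u :=
  Quotient (cosetSetoid H)

/-- The natural quotient map `π : G → G/H`, `a ↦ a ⊕ H`. -/
def qmap {G : Type u} [Gyrogroup G] (H : Set G) (a : G) : GyroQuot H :=
  Quotient.mk (cosetSetoid H) a


namespace GyroAux

open Gyrogroup

variable {G : Type u} [Gyrogroup G]

theorem gyr_inj {a b x y : G} (h : gyr a b x = gyr a b y) : x = y :=
  (gyr_bijective a b).1 h

theorem add_left_cancel' {a x y : G} (h : add a x = add a y) : x = y := by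
  have h2 : add (neg a) (add a x) = add (neg a) (add a y) := by rw [h]
  rw [gyrassoc, gyrassoc, Gyrogroup.neg_add, Gyrogroup.zero_add, Gyrogroup.zero_add] at h2
  exact gyr_inj h2

theorem gyr_zero_left (a z : G) : gyr zero a z = z := by
  have h := gyrassoc (zero : G) a z
  rw [Gyrogroup.zero_add, Gyrogroup.zero_add] at h
  exact (add_left_cancel' h).symm

theorem gyr_neg_self (a z : G) : gyr (neg a) a z = z := by
  have h := congrFun (loop (neg a) a) z
  rw [Gyrogroup.neg_add, gyr_zero_left] at h
  exact h.symm

theorem neg_add_cancel_left (a x : G) : add (neg a) (add a x) = x := by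
  rw [gyrassoc, Gyrogroup.neg_add, Gyrogroup.zero_add, gyr_neg_self]

theorem gyr_self_neg (a z : G) : gyr a (neg a) z = z := by
  have h := congrFun (loop a (neg a)) z
  rw [Gyrogroup.add_neg, gyr_zero_left] at h
  exact h.symm

theorem add_neg_cancel_left (a x : G) : add a (add (neg a) x) = x := by
  rw [gyrassoc, Gyrogroup.add_neg, Gyrogroup.zero_add, gyr_self_neg]

theorem eq_neg_of_add_eq_zero {a b : G} (h : add a b = zero) : b = neg a := by
  have h2 := congrArg (add (neg a)) h
  rw [neg_add_cancel_left, Gyrogroup.add_zero] at h2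
  exact h2

theorem neg_neg' (a : G) : neg (neg a) = a :=
  (eq_neg_of_add_eq_zero (Gyrogroup.neg_add a)).symm

theorem neg_zero' : neg (zero : G) = zero :=
  (eq_neg_of_add_eq_zero (Gyrogroup.zero_add (zero : G))).symm

theorem gyr_zero_right (a b : G) : gyr a b zero = zero := by
  apply add_left_cancel' (a := add a b)
  rw [← gyrassoc, Gyrogroup.add_zero, Gyrogroup.add_zero]

theorem gyr_neg' (a b x : G) : gyr a b (neg x) = neg (gyr a b x) := by
  apply eq_neg_of_add_eq_zero
  rw [← gyr_add, Gyrogroup.add_neg, gyr_zero_right]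

theorem gyrosum_inversion (a b : G) : gyr a b (add (neg b) (neg a)) = neg (add a b) := by
  apply eq_neg_of_add_eq_zero
  rw [← gyrassoc, add_neg_cancel_left, Gyrogroup.add_neg]

theorem gyr_eq (x y w : G) : gyr x y w = add (neg (add x y)) (add x (add y w)) := by
  conv_rhs => rw [gyrassoc x y w]
  rw [neg_add_cancel_left]

theorem gyr_gyr (a b z : G) : gyr a b (gyr (neg b) (neg a) z) = z := by
  have hn : gyr a b (neg (add (neg b) (neg a))) = add a b := by
    rw [gyr_neg', gyrosum_inversion, neg_neg']
  rw [gyr_eq (neg b) (neg a) z, gyr_add, hn, ← gyrassoc, add_neg_cancel_left,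
    add_neg_cancel_left]

theorem gyr_gyr' (a b z : G) : gyr (neg b) (neg a) (gyr a b z) = z := by
  have h := gyr_gyr (neg b) (neg a) z
  rwa [neg_neg', neg_neg'] at h

end GyroAux

namespace GyroAux

open Gyrogroup Set

variable {G : Type u} [Gyrogroup G] {H : Set G}

theorem zero_mem (hH : IsSubgyrogroup H) : (zero : G) ∈ H := by
  obtain ⟨h, hh⟩ := hH.nonempty
  have := hH.add_mem (hH.neg_mem hh) hh
  rwa [Gyrogroup.neg_add] at this

theorem gyr_mem (hH : IsStronglyLSubgyrogroup H) (a b : G) {x : G} (hx : x ∈ H) :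
    gyr a b x ∈ H :=
  hH.gyr_image_subset a b ⟨x, hx, rfl⟩

theorem mem_of_gyr_mem (hH : IsStronglyLSubgyrogroup H) {a b x : G}
    (hx : gyr a b x ∈ H) : x ∈ H := by
  have h := gyr_mem hH (neg b) (neg a) hx
  rwa [gyr_gyr'] at h

theorem lCoset_add_mem (hH : IsStronglyLSubgyrogroup H) (x : G) {h : G} (hh : h ∈ H) :
    lCoset H (add x h) = lCoset H x := by
  ext w
  constructor
  · rintro ⟨u, hu, rfl⟩
    refine ⟨add h (gyr (neg h) (neg x) u),
      hH.add_mem hh (gyr_mem hH _ _ hu), ?_⟩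
    show add x (add h (gyr (neg h) (neg x) u)) = add (add x h) u
    rw [gyrassoc, gyr_gyr]
  · rintro ⟨u, hu, rfl⟩
    refine ⟨gyr x h (add (neg h) u),
      gyr_mem hH _ _ (hH.add_mem (hH.neg_mem hh) hu), ?_⟩
    show add (add x h) (gyr x h (add (neg h) u)) = add x u
    rw [← gyrassoc, add_neg_cancel_left]

theorem lCoset_eq_iff (hH : IsStronglyLSubgyrogroup H) (x y : G) :
    lCoset H x = lCoset H y ↔ add (neg x) y ∈ H := by
  constructor
  · intro hxy
    have hy : y ∈ lCoset H x := by
      rw [hxy]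
      exact ⟨zero, zero_mem hH.toIsSubgyrogroup, Gyrogroup.add_zero y⟩
    obtain ⟨h, hh, hxh⟩ := hy
    have : add (neg x) y = h := by rw [← hxh, neg_add_cancel_left]
    rwa [this]
  · intro hh
    conv_rhs => rw [← add_neg_cancel_left x y]
    exact (lCoset_add_mem hH x hh).symm

theorem qmap_eq_iff (hH : IsStronglyLSubgyrogroup H) (x y : G) :
    qmap H x = qmap H y ↔ add (neg x) y ∈ H := by
  constructor
  · intro h
    exact (lCoset_eq_iff hH x y).mp (Quotient.exact h)
  · intro h
    exact Quotient.sound ((lCoset_eq_iff hH x y).mpr h)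

end GyroAux

namespace GyroAux

open Gyrogroup Set Filter Topology

variable {G : Type u} [Gyrogroup G] [TopologicalSpace G] [TopologicalGyrogroup G]

theorem cont_add : Continuous fun p : G × G => add p.1 p.2 :=
  TopologicalGyrogroup.continuous_add

theorem cont_neg : Continuous (neg : G → G) :=
  TopologicalGyrogroup.continuous_neg

theorem cont_add₂ {X : Type*} [TopologicalSpace X] {f g : X → G}
    (hf : Continuous f) (hg : Continuous g) : Continuous fun x => add (f x) (g x) :=
  cont_add.comp (hf.prodMk hg)

/-- Left translation as a homeomorphism. -/
def homeoL (a : G) : G ≃ₜ G where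
  toFun := fun x => add a x
  invFun := fun x => add (neg a) x
  left_inv := fun x => neg_add_cancel_left a x
  right_inv := fun x => add_neg_cancel_left a x
  continuous_toFun := cont_add₂ continuous_const continuous_id
  continuous_invFun := cont_add₂ continuous_const continuous_id

theorem closure_subset_setAdd {A W : Set G} (hW : IsOpen W) (h0 : (zero : G) ∈ W) :
    closure A ⊆ setAdd A W := by
  intro x hx
  have hM : IsOpen {y : G | add (neg y) x ∈ W} :=
    hW.preimage (cont_add₂ cont_neg continuous_const)
  have hxM : x ∈ {y : G | add (neg y) x ∈ W} := by
    show add (neg x) x ∈ W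
    rw [Gyrogroup.neg_add]; exact h0
  obtain ⟨a, haM, haA⟩ := mem_closure_iff.mp hx _ hM hxM
  exact ⟨a, haA, add (neg a) x, haM, add_neg_cancel_left a x⟩

variable (H : Set G)

theorem isQuotientMap_qmap : IsQuotientMap (qmap H) :=
  @isQuotientMap_quotient_mk' G _ (cosetSetoid H)

theorem continuous_qmap : Continuous (qmap H) :=
  (isQuotientMap_qmap H).continuous

theorem isOpenMap_qmap (hH : IsStronglyLSubgyrogroup H) : IsOpenMap (qmap H) := by
  intro U hU
  rw [← (isQuotientMap_qmap H).isOpen_preimage]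
  have heq : qmap H ⁻¹' (qmap H '' U) = ⋃ h ∈ H, (fun y => add y h) ⁻¹' U := by
    ext y
    simp only [mem_preimage, mem_image, mem_iUnion]
    constructor
    · rintro ⟨u, hu, huy⟩
      refine ⟨add (neg y) u, (qmap_eq_iff hH y u).mp huy.symm, ?_⟩
      show add y (add (neg y) u) ∈ U
      rw [add_neg_cancel_left]; exact hu
    · rintro ⟨h, hh, hyh⟩
      refine ⟨add y h, hyh, ?_⟩
      refine ((qmap_eq_iff hH y (add y h)).mpr ?_).symm
      have : add (neg y) (add y h) = h := neg_add_cancel_left y h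
      rw [this]; exact hh
  rw [heq]
  exact isOpen_biUnion fun h _ => hU.preimage (cont_add₂ continuous_id continuous_const)

theorem isClosed_of_trap [T2Space G] (hH : IsStronglyLSubgyrogroup H)
    {U₀ K : Set G} (hU : IsOpen U₀) (h0 : (zero : G) ∈ U₀) (hK : IsCompact K)
    (hKH : K ⊆ H) (htrap : U₀ ∩ H ⊆ K) : IsClosed H := by
  rw [← closure_subset_iff_isClosed]
  intro x hx
  have hM : IsOpen {y : G | add (neg y) x ∈ U₀} :=
    hU.preimage (cont_add₂ cont_neg continuous_const)
  have hxM : x ∈ {y : G | add (neg y) x ∈ U₀} := by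
    show add (neg x) x ∈ U₀
    rw [Gyrogroup.neg_add]; exact h0
  obtain ⟨h, hhM, hhH⟩ := mem_closure_iff.mp hx _ hM hxM
  have hzH : add (neg h) x ∈ closure H := by
    have himg : (fun w => add (neg h) w) '' closure H ⊆ closure H := by
      rw [show (fun w => add (neg h) w) = ⇑(homeoL (neg h)) from rfl,
        (homeoL (neg h)).image_closure]
      apply closure_mono
      rintro w ⟨u, hu, rfl⟩
      exact hH.add_mem (hH.neg_mem hhH) hu
    exact himg ⟨x, hx, rfl⟩
  have hzK : add (neg h) x ∈ K := by
    have h1 : add (neg h) x ∈ closure (U₀ ∩ H) := hU.inter_closure ⟨hhM, hzH⟩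
    have h2 := closure_mono htrap h1
    rwa [hK.isClosed.closure_eq] at h2
  have hfin : add h (add (neg h) x) ∈ H := hH.add_mem hhH (hKH hzK)
  rwa [add_neg_cancel_left] at hfin

theorem t2_quot (hH : IsStronglyLSubgyrogroup H) (hcl : IsClosed H) :
    T2Space (GyroQuot H) := by
  constructor
  intro p q hpq
  obtain ⟨x, rfl⟩ := Quotient.exists_rep p
  obtain ⟨y, rfl⟩ := Quotient.exists_rep q
  have hxy : add (neg x) y ∉ H := fun hmem => hpq ((qmap_eq_iff hH x y).mpr hmem)
  have hopen : IsOpen {pr : G × G | add (neg pr.1) pr.2 ∈ Hᶜ} :=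
    hcl.isOpen_compl.preimage (cont_add₂ (cont_neg.comp continuous_fst) continuous_snd)
  obtain ⟨X, Y, hXo, hYo, hxX, hyY, hXY⟩ := isOpen_prod_iff.mp hopen x y hxy
  refine ⟨qmap H '' X, qmap H '' Y, isOpenMap_qmap H hH X hXo, isOpenMap_qmap H hH Y hYo,
    ⟨x, hxX, rfl⟩, ⟨y, hyY, rfl⟩, ?_⟩
  rw [Set.disjoint_left]
  rintro c ⟨u1, hu1, rfl⟩ ⟨v1, hv1, hcv⟩
  have : add (neg u1) v1 ∈ H := (qmap_eq_iff hH u1 v1).mp hcv.symm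
  exact hXY (Set.mk_mem_prod hu1 hv1) this

theorem exists_N {U₀ : Set G} (hU : IsOpen U₀) (h0 : (zero : G) ∈ U₀) :
    ∃ N : Set G, IsOpen N ∧ (zero : G) ∈ N ∧ ∀ v w a b : G, v ∈ N → w ∈ N → a ∈ N → b ∈ N →
      add (neg (add v w)) (add a b) ∈ U₀ := by
  have hc : Continuous fun p : G × G × G × G =>
      add (neg (add p.1 p.2.1)) (add p.2.2.1 p.2.2.2) := by
    have h1 : Continuous fun p : G × G × G × G => p.1 := continuous_fst
    have h2 : Continuous fun p : G × G × G × G => p.2.1 := continuous_fst.comp continuous_snd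
    have h3 : Continuous fun p : G × G × G × G => p.2.2.1 :=
      continuous_fst.comp (continuous_snd.comp continuous_snd)
    have h4 : Continuous fun p : G × G × G × G => p.2.2.2 :=
      continuous_snd.comp (continuous_snd.comp continuous_snd)
    exact cont_add₂ (cont_neg.comp (cont_add₂ h1 h2)) (cont_add₂ h3 h4)
  have hPo : IsOpen ((fun p : G × G × G × G =>
      add (neg (add p.1 p.2.1)) (add p.2.2.1 p.2.2.2)) ⁻¹' U₀) := hU.preimage hc
  have hpt : ((zero, zero, zero, zero) : G × G × G × G) ∈ (fun p : G × G × G × G =>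
      add (neg (add p.1 p.2.1)) (add p.2.2.1 p.2.2.2)) ⁻¹' U₀ := by
    show add (neg (add zero zero)) (add zero zero) ∈ U₀
    rw [Gyrogroup.zero_add, neg_zero', Gyrogroup.zero_add]
    exact h0
  obtain ⟨N₁, R₁, h1o, hR1o, h1m, hR1m, hsub1⟩ := isOpen_prod_iff.mp hPo zero (zero, zero, zero) hpt
  obtain ⟨N₂, R₂, h2o, hR2o, h2m, hR2m, hsub2⟩ := isOpen_prod_iff.mp hR1o zero (zero, zero) hR1m
  obtain ⟨N₃, N₄, h3o, h4o, h3m, h4m, hsub3⟩ := isOpen_prod_iff.mp hR2o zero zero hR2m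
  refine ⟨N₁ ∩ N₂ ∩ N₃ ∩ N₄, ((h1o.inter h2o).inter h3o).inter h4o,
    ⟨⟨⟨h1m, h2m⟩, h3m⟩, h4m⟩, ?_⟩
  intro v w a b hv hw ha hb
  exact hsub1 (Set.mk_mem_prod hv.1.1.1
    (hsub2 (Set.mk_mem_prod hw.1.1.2 (hsub3 (Set.mk_mem_prod ha.1.2 hb.2)))))

end GyroAux

/-- If `H` is a locally compact strongly L-subgyrogroup of a Hausdorff
topological gyrogroup `G` and `G/H` is locally compact, then `G` is locally compact. -/
theorem stmt_16 {G : Type u} [Gyrogroup G] [TopologicalSpace G] [TopologicalGyrogroup G]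
    [T2Space G] (H : Set G) (hH : IsStronglyLSubgyrogroup H)
    (hlcH : LocallyCompactSpace H) (hlcQ : LocallyCompactSpace (GyroQuot H)) :
    LocallyCompactSpace G := by
  classical
  open Gyrogroup Set Filter Topology GyroAux in
  -- Step 1: a compact set K ⊆ H that is a neighborhood of zero in H
  obtain ⟨s, hs_nhds, -, hs_cpt⟩ := hlcH.local_compact_nhds
    ⟨zero, zero_mem hH.toIsSubgyrogroup⟩ Set.univ Filter.univ_mem
  set K : Set G := Subtype.val '' s with hKdef
  have hK_cpt : IsCompact K := hs_cpt.image continuous_subtype_val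
  have hKH : K ⊆ H := by rintro _ ⟨⟨x, hx⟩, -, rfl⟩; exact hx
  obtain ⟨t, htn, hpre⟩ := (mem_nhds_subtype H _ _).mp hs_nhds
  obtain ⟨U₀, hU₀t, hU₀o, hU₀0⟩ := mem_nhds_iff.mp htn
  have htrap : U₀ ∩ H ⊆ K := by
    rintro x ⟨hxU, hxH⟩
    exact ⟨⟨x, hxH⟩, hpre (hU₀t hxU), rfl⟩
  -- Step 2: H is closed, hence G/H is Hausdorff
  have hcl : IsClosed H := isClosed_of_trap H hH hU₀o hU₀0 hK_cpt hKH htrap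
  haveI hT2Q : T2Space (GyroQuot H) := t2_quot H hH hcl
  -- Step 3: the small neighborhood N of zero
  obtain ⟨N, hNo, hN0, hNprop⟩ := exists_N hU₀o hU₀0
  -- Step 4: a compact neighborhood F of π 0 inside π(N)
  have hπN : qmap H '' N ∈ nhds (qmap H zero) :=
    (isOpenMap_qmap H hH N hNo).mem_nhds ⟨zero, hN0, rfl⟩
  obtain ⟨F, hFn, hFsub, hFc⟩ := hlcQ.local_compact_nhds (qmap H zero) _ hπN
  set Cset : Set G := closure N ∩ qmap H ⁻¹' F with hCdef
  have hCclosed : IsClosed Cset :=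
    isClosed_closure.inter (hFc.isClosed.preimage (continuous_qmap H))
  have hCnbhd : Cset ∈ nhds (zero : G) :=
    Filter.inter_mem (Filter.mem_of_superset (hNo.mem_nhds hN0) subset_closure)
      ((continuous_qmap H).continuousAt.preimage_mem_nhds hFn)
  have hCcomp : IsCompact Cset := by
    rw [isCompact_iff_ultrafilter_le_nhds]
    intro 𝒰 h𝒰
    have hCmem : Cset ∈ 𝒰 := Filter.le_principal_iff.mp h𝒰
    by_contra hcon
    push_neg at hcon
    have hlimC : ∀ y : G, ¬ (↑𝒰 ≤ nhds y) := by
      intro y hy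
      have hyc : y ∈ closure Cset := by
        rw [mem_closure_iff_clusterPt]
        exact ClusterPt.mono (ClusterPt.of_le_nhds hy) (le_principal_iff.mpr hCmem)
      exact hcon y (hCclosed.closure_eq ▸ hyc) hy
    -- push to the quotient
    have hFmem : F ∈ Filter.map (qmap H) ↑𝒰 :=
      Filter.mem_map.mpr (Filter.mem_of_superset hCmem fun x hx => hx.2)
    obtain ⟨q, hqF, hq⟩ := hFc.ultrafilter_le_nhds (𝒰.map (qmap H))
      (Filter.le_principal_iff.mpr hFmem)
    obtain ⟨v₀, hv₀N, hv₀q⟩ := hFsub hqF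
    -- the compact set v₀ ⊕ K and an open E ⊇ v₀ ⊕ K with E ∉ 𝒰
    set Y : Set G := (fun h => add v₀ h) '' K with hYdef
    have hYc : IsCompact Y := hK_cpt.image (cont_add₂ continuous_const continuous_id)
    have hOex : ∀ y ∈ Y, ∃ O : Set G, IsOpen O ∧ y ∈ O ∧ O ∉ 𝒰 := by
      intro y _
      have hny := hlimC y
      rw [Filter.le_def] at hny
      push_neg at hny
      obtain ⟨O, hOn, hOnot⟩ := hny
      obtain ⟨O', hO'sub, hO'open, hyO'⟩ := mem_nhds_iff.mp hOn
      exact ⟨O', hO'open, hyO', fun hmem => hOnot (Filter.mem_of_superset hmem hO'sub)⟩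
    choose O hOopen hOmem hOnot using hOex
    obtain ⟨tfin, htsub⟩ := hYc.elim_nhds_subcover' (fun y hy => O y hy)
      (fun y hy => (hOopen y hy).mem_nhds (hOmem y hy))
    set E : Set G := ⋃ y ∈ tfin, O y y.2 with hEdef
    have hEopen : IsOpen E := isOpen_biUnion fun y _ => hOopen y y.2
    have hEnot : E ∉ 𝒰 := by
      intro hE
      have : ∃ y ∈ (tfin : Set Y), O y y.2 ∈ 𝒰 := by
        rw [← Ultrafilter.finite_biUnion_mem_iff tfin.finite_toSet]
        convert hE using 2 <;> simp
      obtain ⟨y, -, hyO⟩ := this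
      exact hOnot y y.2 hyO
    -- tube lemma
    have htube : ∃ W : Set G, IsOpen W ∧ (zero : G) ∈ W ∧
        ∀ w ∈ W, ∀ h ∈ K, add (add v₀ w) h ∈ E := by
      have hΨ : Continuous fun p : G × G => add (add v₀ p.1) p.2 :=
        cont_add₂ (cont_add₂ continuous_const continuous_fst) continuous_snd
      have hsub : ({zero} : Set G) ×ˢ K ⊆
          (fun p : G × G => add (add v₀ p.1) p.2) ⁻¹' E := by
        rintro ⟨w, h⟩ ⟨hw, hh⟩
        have hw0 : w = zero := hw
        show add (add v₀ w) h ∈ E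
        rw [hw0, Gyrogroup.add_zero]
        exact htsub ⟨h, hh, rfl⟩
      obtain ⟨u, v, huo, hvo, hzu, hKv, huv⟩ := generalized_tube_lemma
        isCompact_singleton hK_cpt (hEopen.preimage hΨ) hsub
      exact ⟨u, huo, hzu rfl, fun w hw h hh => huv (Set.mk_mem_prod hw (hKv hh))⟩
    obtain ⟨W', hW'o, hW'0, hW'prop⟩ := htube
    set W : Set G := W' ∩ N with hWdef
    -- the trap set in 𝒰
    have hPopen : IsOpen ((fun w => add v₀ w) '' W) :=
      (homeoL v₀).isOpenMap W (hW'o.inter hNo)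
    have hPq : qmap H '' ((fun w => add v₀ w) '' W) ∈ nhds q := by
      apply (isOpenMap_qmap H hH _ hPopen).mem_nhds
      refine ⟨add v₀ zero, ⟨zero, ⟨hW'0, hN0⟩, rfl⟩, ?_⟩
      rw [Gyrogroup.add_zero, hv₀q]
    have hpre𝒰 : qmap H ⁻¹' (qmap H '' ((fun w => add v₀ w) '' W)) ∈ 𝒰 :=
      Filter.mem_map.mp (hq hPq)
    have hclN𝒰 : closure N ∈ 𝒰 := Filter.mem_of_superset hCmem fun x hx => hx.1
    have hTE : closure N ∩ qmap H ⁻¹' (qmap H '' ((fun w => add v₀ w) '' W)) ⊆ E := by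
      rintro x ⟨hxcl, hxpre⟩
      obtain ⟨p, ⟨w, hwW, rfl⟩, hpx⟩ := hxpre
      have hhH : add (neg (add v₀ w)) x ∈ H := (qmap_eq_iff hH (add v₀ w) x).mp hpx
      obtain ⟨aa, haa, bb, hbb, hab⟩ := closure_subset_setAdd hNo hN0 hxcl
      have hU₀' : add (neg (add v₀ w)) x ∈ U₀ := by
        rw [← hab]
        exact hNprop v₀ w aa bb hv₀N hwW.2 haa hbb
      have hhK : add (neg (add v₀ w)) x ∈ K := htrap ⟨hU₀', hhH⟩
      have hxeq : x = add (add v₀ w) (add (neg (add v₀ w)) x) :=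
        (GyroAux.add_neg_cancel_left _ _).symm
      rw [hxeq]
      exact hW'prop w hwW.1 _ hhK
    exact hEnot (Filter.mem_of_superset (Filter.inter_mem hclN𝒰 hpre𝒰) hTE)
  -- Step 5: homogeneity + T2 ⇒ locally compact
  haveI : WeaklyLocallyCompactSpace G := by
    constructor
    intro x
    refine ⟨(homeoL x) '' Cset, hCcomp.image (homeoL x).continuous, ?_⟩
    have hmap := (homeoL x).map_nhds_eq (zero : G)
    have hx0 : (homeoL x) zero = x := Gyrogroup.add_zero x
    rw [hx0] at hmap
    rw [← hmap]
    exact Filter.image_mem_map hCnbhd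
  infer_instance
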